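/- In the Task Scheduling Game with zero costs (c_i ≡ 0 for all i), the price of anarchy of the potential-maximizing Nash equilibrium is at most H_N: if s* maximizes the potential Φ and s° maximizes the social welfare W, then W(s°) ≤ H_N · W(s*), where H_N = ∑_{m=1}^N 1/m. -/

import Mathlib

/-- Number of players choosing task `k` under profile `s`. -/
def Mk {ι σ : Type*} [Fintype ι] [DecidableEq σ] (s : ι → Finset σ) (k : σ) : ℕ :=
  (Finset.univ.filter (fun i => k ∈ s i)).card

/-- Payoff of player `i` in the Task Scheduling Game. -/
noncomputable def payoff {ι σ : Type*} [Fintype ι] [DecidableEq σ] (V : σ → ℝ)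
    (c : ι → Finset σ → ℝ) (i : ι) (s : ι → Finset σ) : ℝ :=
  (∑ k ∈ s i, V k / (Mk s k : ℝ)) - c i (s i)

/-- Potential function of the Task Scheduling Game. -/
noncomputable def potential {ι σ : Type*} [Fintype ι] [Fintype σ] [DecidableEq σ]
    (V : σ → ℝ) (c : ι → Finset σ → ℝ) (s : ι → Finset σ) : ℝ :=
  (∑ k : σ, ∑ m ∈ Finset.Icc 1 (Mk s k), V k / (m : ℝ)) - ∑ i : ι, c i (s i)


/-- Social welfare of the Task Scheduling Game. -/
noncomputable def welfare {ι σ : Type*} [Fintype ι] [Fintype σ] [DecidableEq σ]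
    (V : σ → ℝ) (c : ι → Finset σ → ℝ) (s : ι → Finset σ) : ℝ :=
  (∑ k : σ, if 1 ≤ Mk s k then V k else 0) - ∑ i : ι, c i (s i)

/-!
For a task chosen by `M ≥ 1` of the `N` players, `V/1 + ⋯ + V/M` lies between `V` and `H_N · V`;
for an unchosen task both sides vanish. Summing over tasks gives `W ≤ Φ ≤ H_N · W`, hence
`W(s°) ≤ Φ(s°) ≤ Φ(s*) ≤ H_N · W(s*)`.
-/

open Finset

lemma Mk_le_card {ι σ : Type*} [Fintype ι] [DecidableEq σ] (s : ι → Finset σ) (k : σ) :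
    Mk s k ≤ Fintype.card ι :=
  card_filter_le _ _

lemma ite_le_sum_Icc_div {v : ℝ} (hv : 0 ≤ v) (n : ℕ) :
    (if 1 ≤ n then v else 0) ≤ ∑ m ∈ Icc 1 n, v / m := by
  split_ifs with hn
  · calc v = ∑ m ∈ Icc (1 : ℕ) 1, v / m := by simp
      _ ≤ ∑ m ∈ Icc 1 n, v / m :=
        sum_le_sum_of_subset_of_nonneg (Icc_subset_Icc_right hn) fun _ _ _ => by positivity
  · exact sum_nonneg fun _ _ => by positivity

lemma sum_Icc_div_le_harmonic_mul_ite {v : ℝ} (hv : 0 ≤ v) {n N : ℕ} (hnN : n ≤ N) :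
    ∑ m ∈ Icc 1 n, v / m ≤ (∑ m ∈ Icc 1 N, (1 : ℝ) / m) * (if 1 ≤ n then v else 0) := by
  split_ifs with hn
  · calc ∑ m ∈ Icc 1 n, v / m ≤ ∑ m ∈ Icc 1 N, v / m :=
          sum_le_sum_of_subset_of_nonneg (Icc_subset_Icc_right hnN) fun _ _ _ => by positivity
      _ = (∑ m ∈ Icc 1 N, (1 : ℝ) / m) * v := by
          rw [sum_mul]
          exact sum_congr rfl fun _ _ => by ring
  · simp [Nat.lt_one_iff.mp (not_le.mp hn)]

section TaskScheduling

variable {ι σ : Type*} [Fintype ι] [Fintype σ] [DecidableEq σ]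
  {V : σ → ℝ} {c : ι → Finset σ → ℝ}

lemma welfare_le_potential (hV : ∀ k, 0 ≤ V k) (s : ι → Finset σ) :
    welfare V c s ≤ potential V c s :=
  sub_le_sub_right (sum_le_sum fun k _ => ite_le_sum_Icc_div (hV k) _) _

lemma potential_le_harmonic_mul_welfare (hV : ∀ k, 0 ≤ V k)
    (hc : ∀ (i : ι) (t : Finset σ), c i t = 0) (s : ι → Finset σ) :
    potential V c s ≤ (∑ m ∈ Icc 1 (Fintype.card ι), (1 : ℝ) / m) * welfare V c s := by
  simp only [potential, welfare, hc, sum_const_zero, sub_zero, mul_sum]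
  exact sum_le_sum fun k _ => sum_Icc_div_le_harmonic_mul_ite (hV k) (Mk_le_card s k)

end TaskScheduling

theorem stmt_12_general {ι σ : Type*} [Fintype ι] [Fintype σ] [DecidableEq σ]
    (V : σ → ℝ) (hV : ∀ k, 0 ≤ V k) (c : ι → Finset σ → ℝ)
    (hc : ∀ (i : ι) (t : Finset σ), c i t = 0)
    (sstar scirc : ι → Finset σ)
    (hstar : ∀ s : ι → Finset σ, potential V c s ≤ potential V c sstar) :
    welfare V c scirc ≤
      (∑ m ∈ Finset.Icc 1 (Fintype.card ι), (1 : ℝ) / m) * welfare V c sstar :=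
  calc welfare V c scirc ≤ potential V c scirc := welfare_le_potential hV scirc
    _ ≤ potential V c sstar := hstar scirc
    _ ≤ _ := potential_le_harmonic_mul_welfare hV hc sstar

theorem stmt_12 {ι σ : Type*} [Fintype ι] [Fintype σ] [DecidableEq σ]
    (V : σ → ℝ) (hV : ∀ k, 0 ≤ V k) (c : ι → Finset σ → ℝ)
    (hc : ∀ (i : ι) (t : Finset σ), c i t = 0)
    (sstar scirc : ι → Finset σ)
    (hstar : ∀ s : ι → Finset σ, potential V c s ≤ potential V c sstar)
    (hcirc : ∀ s : ι → Finset σ, welfare V c s ≤ welfare V c scirc) :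
    welfare V c scirc ≤
      (∑ m ∈ Finset.Icc 1 (Fintype.card ι), (1 : ℝ) / m) * welfare V c sstar :=
  stmt_12_general V hV c hc sstar scirc hstar
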